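/- Let X_1,...,X_n be independent random variables with X_i ∼ Bernoulli(p_i), and let ω_1,...,ω_n > 0 be weights. Suppose there is a constant c_1 ≥ 1 with (max_i ω_i) · Σ_i p_i ≤ c_1 · Σ_i ω_i p_i. Then for every t ≥ Σ_i ω_i p_i, P(Σ_i ω_i X_i ≥ t) ≤ ( e^{c_1} · Σ_i ω_i p_i / t )^{t / max_i ω_i}. -/

import Mathlib

/-!
Chernoff's method. For `0 ≤ w ≤ M`, convexity of `exp` gives
`exp (λ w) ≤ 1 + (w / M) (exp (λ M) - 1)`, so the mgf of `ω i * X i` at `λ` is at most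
`exp (p i ω i (exp (λ M) - 1) / M)`. By independence, with `m = ∑ ω i p i`,
`P(∑ ω i X i ≥ t) ≤ exp (-λ t + m (exp (λ M) - 1) / M)` for every `λ ≥ 0`.
The choice `λ = log (t / m) / M` turns this into `(m / t) ^ (t / M) * exp ((t - m) / M)`, which is
at most `(exp c₁ * m / t) ^ (t / M)` because `c₁ ≥ 1`. If `m = 0`, letting `λ → ∞` shows that
the event is null.
-/

open MeasureTheory ProbabilityTheory Real

section ZeroOne

variable {Ω : Type*} [MeasurableSpace Ω] {μ : Measure Ω} {X : Ω → ℝ}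

lemma integral_eq_measureReal_of_zero_or_one (hX : Measurable X)
    (hval : ∀ ζ, X ζ = 0 ∨ X ζ = 1) : ∫ ζ, X ζ ∂μ = μ.real {ζ | X ζ = 1} := by
  have hind : ∀ ζ, X ζ = {ζ | X ζ = 1}.indicator 1 ζ := fun ζ => by
    rcases hval ζ with h | h <;> simp [h]
  have hmeas : MeasurableSet {ζ | X ζ = 1} := hX (measurableSet_singleton 1)
  rw [integral_congr_ae (ae_of_all μ hind), integral_indicator_one hmeas]

lemma integrable_of_zero_or_one [IsFiniteMeasure μ] (hX : Measurable X)
    (hval : ∀ ζ, X ζ = 0 ∨ X ζ = 1) : Integrable X μ :=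
  .of_bound hX.aestronglyMeasurable 1 <| ae_of_all μ fun ζ => by
    rcases hval ζ with h | h <;> simp [h]

lemma exp_mul_mul_of_zero_or_one {x : ℝ} (hx : x = 0 ∨ x = 1) (l w : ℝ) :
    exp (l * (w * x)) = 1 + (exp (l * w) - 1) * x := by
  rcases hx with rfl | rfl <;> simp

lemma integrable_exp_mul_const_mul_of_zero_or_one [IsFiniteMeasure μ] (hX : Measurable X)
    (hval : ∀ ζ, X ζ = 0 ∨ X ζ = 1) (l w : ℝ) :
    Integrable (fun ζ => exp (l * (w * X ζ))) μ := by
  simp_rw [exp_mul_mul_of_zero_or_one (hval _)]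
  exact (integrable_const 1).add ((integrable_of_zero_or_one hX hval).const_mul _)

lemma mgf_const_mul_of_zero_or_one [IsProbabilityMeasure μ] (hX : Measurable X)
    (hval : ∀ ζ, X ζ = 0 ∨ X ζ = 1) (l w : ℝ) :
    mgf (fun ζ => w * X ζ) μ l = 1 + μ.real {ζ | X ζ = 1} * (exp (l * w) - 1) := by
  simp_rw [mgf, exp_mul_mul_of_zero_or_one (hval _)]
  rw [integral_add (integrable_const 1) ((integrable_of_zero_or_one hX hval).const_mul _),
    integral_const_mul, integral_eq_measureReal_of_zero_or_one hX hval]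
  simp [mul_comm]

end ZeroOne

lemma exp_mul_le_one_add_div_mul {a M : ℝ} (ha : 0 ≤ a) (haM : a ≤ M) (hM : 0 < M) (l : ℝ) :
    exp (l * a) ≤ 1 + a / M * (exp (l * M) - 1) := by
  have hs : a / M ≤ 1 := (div_le_one hM).mpr haM
  have := convexOn_exp.2 (Set.mem_univ 0) (Set.mem_univ (l * M)) (sub_nonneg.mpr hs)
    (div_nonneg ha hM.le) (sub_add_cancel 1 (a / M))
  have hconv : a / M * (l * M) = l * a := by
    rw [mul_comm l, ← mul_assoc, div_mul_cancel₀ _ hM.ne', mul_comm]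
  simp only [smul_eq_mul, mul_zero, zero_add, exp_zero, mul_one, hconv] at this
  linarith

lemma one_add_mul_exp_sub_one_le_exp {p a M : ℝ} (hp : 0 ≤ p) (ha : 0 ≤ a) (haM : a ≤ M)
    (hM : 0 < M) (l : ℝ) :
    1 + p * (exp (l * a) - 1) ≤ exp (p * a / M * (exp (l * M) - 1)) := calc
  1 + p * (exp (l * a) - 1) ≤ 1 + p * (a / M * (exp (l * M) - 1)) := by
    gcongr; linarith [exp_mul_le_one_add_div_mul ha haM hM l]
  _ ≤ _ := by
    rw [← mul_assoc, mul_div_assoc]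
    linarith [add_one_le_exp (p * (a / M) * (exp (l * M) - 1))]

lemma measureReal_weighted_sum_ge_le {Ω ι : Type*} [MeasurableSpace Ω] {μ : Measure Ω}
    [Fintype ι] {X : ι → Ω → ℝ} {p ω : ι → ℝ} {M l : ℝ} (hmeas : ∀ i, Measurable (X i))
    (hindep : iIndepFun X μ) (hval : ∀ i ζ, X i ζ = 0 ∨ X i ζ = 1)
    (hdist : ∀ i, μ.real {ζ | X i ζ = 1} = p i) (hω : ∀ i, 0 ≤ ω i) (hωM : ∀ i, ω i ≤ M)
    (hM : 0 < M) (hl : 0 ≤ l) (t : ℝ) :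
    μ.real {ζ | t ≤ ∑ i, ω i * X i ζ} ≤
      exp (-l * t + (exp (l * M) - 1) / M * ∑ i, ω i * p i) := by
  have := hindep.isProbabilityMeasure
  set Y : ι → Ω → ℝ := fun i ζ => ω i * X i ζ
  have hYmeas : ∀ i, Measurable (Y i) := fun i => (hmeas i).const_mul (ω i)
  have hYindep : iIndepFun Y μ := hindep.comp (fun i x => ω i * x) fun i => measurable_const_mul _
  have hset : {ζ | t ≤ ∑ i, ω i * X i ζ} = {ζ | t ≤ (∑ i, Y i) ζ} := by
    ext ζ; simp [Y]
  have hint : Integrable (fun ζ => exp (l * (∑ i, Y i) ζ)) μ :=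
    hYindep.integrable_exp_mul_sum hYmeas fun i _ =>
      integrable_exp_mul_const_mul_of_zero_or_one (hmeas i) (hval i) l (ω i)
  have hmgf : ∏ i, mgf (Y i) μ l ≤ exp ((exp (l * M) - 1) / M * ∑ i, ω i * p i) := calc
    ∏ i, mgf (Y i) μ l ≤ ∏ i, exp (p i * ω i / M * (exp (l * M) - 1)) :=
      Finset.prod_le_prod (fun i _ => mgf_nonneg) fun i _ => by
        rw [mgf_const_mul_of_zero_or_one (hmeas i) (hval i), hdist]
        exact one_add_mul_exp_sub_one_le_exp (hdist i ▸ measureReal_nonneg) (hω i) (hωM i) hM l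
    _ = exp ((exp (l * M) - 1) / M * ∑ i, ω i * p i) := by
      rw [← exp_sum, Finset.mul_sum]
      congr 1; refine Finset.sum_congr rfl fun i _ => ?_
      ring
  calc μ.real {ζ | t ≤ ∑ i, ω i * X i ζ} ≤ exp (-l * t) * mgf (∑ i, Y i) μ l :=
        hset ▸ measure_ge_le_exp_mul_mgf t hl hint
    _ ≤ exp (-l * t) * exp ((exp (l * M) - 1) / M * ∑ i, ω i * p i) := by
        rw [hYindep.mgf_sum hYmeas]; gcongr
    _ = _ := (exp_add _ _).symm

lemma exp_neg_mul_add_le_rpow {m t M c : ℝ} (hm : 0 < m) (hmt : m ≤ t) (hM : 0 < M)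
    (hc : 1 ≤ c) :
    exp (-(log (t / m) / M) * t + (exp (log (t / m) / M * M) - 1) / M * m) ≤
      (exp c * m / t) ^ (t / M) := by
  have ht : 0 < t := hm.trans_le hmt
  rw [div_mul_cancel₀ _ hM.ne', exp_log (div_pos ht hm), rpow_def_of_pos (by positivity),
    exp_le_exp, log_div (by positivity) ht.ne', log_mul (exp_ne_zero c) hm.ne', log_exp,
    log_div ht.ne' hm.ne']
  field_simp
  nlinarith

lemma nonpos_of_forall_le_exp_neg_mul {a t : ℝ} (ht : 0 < t)
    (h : ∀ l, 0 ≤ l → a ≤ exp (-l * t)) : a ≤ 0 := by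
  have hlim : Filter.Tendsto (fun l => exp (-l * t)) Filter.atTop (nhds 0) :=
    (tendsto_exp_neg_atTop_nhds_zero.comp (Filter.tendsto_id.atTop_mul_const ht)).congr
      fun l => by simp [neg_mul]
  exact ge_of_tendsto hlim (Filter.eventually_atTop.2 ⟨0, h⟩)

theorem weighted_bernoulli_tail_general {Ω : Type*} [MeasurableSpace Ω] (μ : Measure Ω)
    [IsProbabilityMeasure μ] (n : ℕ) (X : Fin n → Ω → ℝ) (p ω : Fin n → ℝ) (M c₁ t : ℝ)
    (hmeas : ∀ i, Measurable (X i))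
    (hindep : iIndepFun X μ)
    (hval : ∀ i ζ, X i ζ = 0 ∨ X i ζ = 1)
    (hp : ∀ i, p i ∈ Set.Icc (0 : ℝ) 1)
    (hdist : ∀ i, μ {ζ | X i ζ = 1} = ENNReal.ofReal (p i))
    (hω : ∀ i, 0 < ω i)
    (hM : IsGreatest (Set.range ω) M)
    (hc₁ : 1 ≤ c₁)
    (ht : ∑ i, ω i * p i ≤ t) :
    μ {ζ | t ≤ ∑ i, ω i * X i ζ} ≤
      ENNReal.ofReal ((Real.exp c₁ * (∑ i, ω i * p i) / t) ^ (t / M)) := by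
  obtain ⟨i₀, rfl⟩ := hM.1
  have hMpos : 0 < ω i₀ := hω i₀
  have hdist' : ∀ i, μ.real {ζ | X i ζ = 1} = p i := fun i => by
    rw [measureReal_def, hdist, ENNReal.toReal_ofReal (hp i).1]
  have hchernoff := fun l (hl : 0 ≤ l) => measureReal_weighted_sum_ge_le hmeas hindep hval
    hdist' (fun i => (hω i).le) (fun i => hM.2 ⟨i, rfl⟩) hMpos hl t
  set m := ∑ i, ω i * p i
  have hm : 0 ≤ m := Finset.sum_nonneg fun i _ => mul_nonneg (hω i).le (hp i).1
  rw [← ofReal_measureReal]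
  refine ENNReal.ofReal_le_ofReal ?_
  rcases (hm.trans ht).eq_or_lt with rfl | htpos
  · simp [measureReal_le_one]
  rcases hm.eq_or_lt with hm0 | hmpos
  · rw [← hm0, mul_zero, zero_div, zero_rpow (div_pos htpos hMpos).ne']
    refine nonpos_of_forall_le_exp_neg_mul htpos fun l hl => ?_
    simpa [← hm0] using hchernoff l hl
  · exact (hchernoff _ (div_nonneg (log_nonneg ((one_le_div hmpos).2 ht)) hMpos.le)).trans
      (exp_neg_mul_add_le_rpow hmpos ht hMpos hc₁)

/-- Concentration inequality for a weighted sum of independent Bernoulli random variables: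
if `(max_i ω_i) ⬝ Σ p_i ≤ c₁ ⬝ Σ ω_i p_i` then for every `t ≥ Σ ω_i p_i`,
`P(Σ ω_i X_i ≥ t) ≤ (e^{c₁} Σ ω_i p_i / t)^{t / max_i ω_i}`. -/
theorem weighted_bernoulli_tail {Ω : Type*} [MeasurableSpace Ω] (μ : Measure Ω)
    [IsProbabilityMeasure μ] (n : ℕ) (X : Fin n → Ω → ℝ) (p ω : Fin n → ℝ) (M c₁ t : ℝ)
    (hmeas : ∀ i, Measurable (X i))
    (hindep : iIndepFun X μ)
    (hval : ∀ i ζ, X i ζ = 0 ∨ X i ζ = 1)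
    (hp : ∀ i, p i ∈ Set.Icc (0 : ℝ) 1)
    (hdist : ∀ i, μ {ζ | X i ζ = 1} = ENNReal.ofReal (p i))
    (hω : ∀ i, 0 < ω i)
    (hM : IsGreatest (Set.range ω) M)
    (hc₁ : 1 ≤ c₁)
    (hbal : M * ∑ i, p i ≤ c₁ * ∑ i, ω i * p i)
    (ht : ∑ i, ω i * p i ≤ t) :
    μ {ζ | t ≤ ∑ i, ω i * X i ζ} ≤
      ENNReal.ofReal ((Real.exp c₁ * (∑ i, ω i * p i) / t) ^ (t / M)) :=
  weighted_bernoulli_tail_general μ n X p ω M c₁ t hmeas hindep hval hp hdist hω hM hc₁ ht
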